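/- arXiv:quant-ph/0312010 — 2 statements merged into one kernel-verified Lean document; each statement's English description precedes it below -/
import Mathlib

section
/- (Lemma 2) Let x and y be probability vectors with the same number of entries and let k ≥ 1 be an integer. If x^{⊗p} is majorized by y^{⊗p} for every integer p with k ≤ p ≤ 2k−1, then x^{⊗p} is majorized by y^{⊗p} for every integer p ≥ k. -/
open Finset

/-- Sum of the `l` largest entries of `x` (maximum over subsets of size `l`),
counted with multiplicity: this is `S_l(x)` from the paper. -/
noncomputable def topSum {ι : Type*} [Fintype ι] (x : ι → ℝ) (l : ℕ) : ℝ :=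
  sSup {s : ℝ | ∃ A : Finset ι, A.card = l ∧ s = ∑ i ∈ A, x i}

/-- Sum of the `l` smallest entries of `x` (minimum over subsets of size `l`). -/
noncomputable def botSum {ι : Type*} [Fintype ι] (x : ι → ℝ) (l : ℕ) : ℝ :=
  sInf {s : ℝ | ∃ A : Finset ι, A.card = l ∧ s = ∑ i ∈ A, x i}

/-- `x` is majorized by `y` (written `x ≺ y`): for every `1 ≤ l ≤ N`,
the sum of the `l` largest entries of `x` is at most that of `y`. -/
def Majorized {ι : Type*} [Fintype ι] (x y : ι → ℝ) : Prop :=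
  ∀ l : ℕ, 1 ≤ l → l ≤ Fintype.card ι → topSum x l ≤ topSum y l

/-- Tensor product of two vectors: all pairwise products of entries. -/
def tensor {ι κ : Type*} (x : ι → ℝ) (z : κ → ℝ) : ι × κ → ℝ :=
  fun p => x p.1 * z p.2

/-- `p`-fold tensor power of a vector. -/
def tensorPow {ι : Type*} (x : ι → ℝ) (p : ℕ) : (Fin p → ι) → ℝ :=
  fun f => ∏ j, x (f j)

/-- Sum of the first `l` entries of a vector `x : Fin n → ℝ`. -/
def prefixSum {n : ℕ} (x : Fin n → ℝ) (l : ℕ) : ℝ :=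
  ∑ j ∈ Finset.univ.filter (fun j : Fin n => (j : ℕ) < l), x j

/-- Sum of the entries of `x : Fin n → ℝ` from index `l` (0-based) on. -/
def suffixSum {n : ℕ} (x : Fin n → ℝ) (l : ℕ) : ℝ :=
  ∑ j ∈ Finset.univ.filter (fun j : Fin n => l ≤ (j : ℕ)), x j

/-- `E_l(x) = 1 - S_{l-1}(x)`: the sum of the entries of the probability vector `x`
from the `l`-th largest to the smallest. -/
noncomputable def Evec {ι : Type*} [Fintype ι] (x : ι → ℝ) (l : ℕ) : ℝ :=
  1 - topSum x (l - 1)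

/-- Vidal conversion probability `P(x → y) = min_{1 ≤ l ≤ N} E_l(x)/E_l(y)`. -/
noncomputable def vidalP {ι : Type*} [Fintype ι] (x y : ι → ℝ) : ℝ :=
  sInf {r : ℝ | ∃ l : ℕ, 1 ≤ l ∧ l ≤ Fintype.card ι ∧ r = Evec x l / Evec y l}

/-- Nonincreasing rearrangement of the entries of `x`, as a list. -/
noncomputable def sortedDesc {ι : Type*} [Fintype ι] (x : ι → ℝ) : List ℝ :=
  ((Finset.univ.val.map x).sort (· ≤ ·)).reverse

/-!
Majorization is stable under tensoring with a nonnegative vector `z`: a set `B` of index pairs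
of size `l` splits into fibres `B_j = {i | (i, j) ∈ B}`, so
`∑_{(i,j) ∈ B} x_i z_j ≤ ∑_j z_j S_{|B_j|}(x) ≤ ∑_j z_j S_{|B_j|}(y) ≤ S_l(y ⊗ z)`,
the last step by taking the top `|B_j|` entries of `y` in each fibre.
Hence `x^{⊗p} ≺ y^{⊗p}` and `x^{⊗k} ≺ y^{⊗k}` give `x^{⊗(p+k)} ≺ y^{⊗(p+k)}`, and every `p ≥ 2k`
is `(p - k) + k` with `k ≤ p - k < p`, so strong induction reduces to `k ≤ p ≤ 2k - 1`.
-/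

section topSum

variable {ι κ : Type*} [Fintype ι]

theorem sum_le_topSum (x : ι → ℝ) {A : Finset ι} {l : ℕ} (hA : A.card = l) :
    ∑ i ∈ A, x i ≤ topSum x l := by
  refine le_csSup ?_ ⟨A, hA, rfl⟩
  refine ⟨∑ i, |x i|, ?_⟩
  rintro _ ⟨B, -, rfl⟩
  exact (Finset.sum_le_sum fun i _ => le_abs_self (x i)).trans
    (Finset.sum_le_sum_of_subset_of_nonneg B.subset_univ fun i _ _ => abs_nonneg (x i))

theorem exists_card_eq_sum_eq_topSum (x : ι → ℝ) {l : ℕ} (hl : l ≤ Fintype.card ι) :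
    ∃ A : Finset ι, A.card = l ∧ ∑ i ∈ A, x i = topSum x l := by
  have hne : (univ.powersetCard l).Nonempty := Finset.powersetCard_nonempty.2 (by simpa using hl)
  obtain ⟨A, hA, hmax⟩ := (univ.powersetCard l).exists_max_image (fun A => ∑ i ∈ A, x i) hne
  have hAl := (Finset.mem_powersetCard.1 hA).2
  refine ⟨A, hAl, le_antisymm (sum_le_topSum x hAl) (csSup_le ⟨_, A, hAl, rfl⟩ ?_)⟩
  rintro _ ⟨B, hB, rfl⟩
  exact hmax B (Finset.mem_powersetCard.2 ⟨B.subset_univ, hB⟩)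

theorem topSum_le_of_forall {x : ι → ℝ} {l : ℕ} {c : ℝ} (hl : l ≤ Fintype.card ι)
    (h : ∀ A : Finset ι, A.card = l → ∑ i ∈ A, x i ≤ c) : topSum x l ≤ c := by
  obtain ⟨A, hA, hsum⟩ := exists_card_eq_sum_eq_topSum x hl
  exact hsum ▸ h A hA

theorem topSum_zero (x : ι → ℝ) : topSum x 0 = 0 := by
  obtain ⟨A, hA, hsum⟩ := exists_card_eq_sum_eq_topSum x (Nat.zero_le _)
  rw [← hsum, Finset.card_eq_zero.1 hA, Finset.sum_empty]

theorem topSum_comp_le [Fintype κ] (e : κ ≃ ι) (x : ι → ℝ) {l : ℕ}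
    (hl : l ≤ Fintype.card κ) : topSum (x ∘ e) l ≤ topSum x l :=
  topSum_le_of_forall hl fun A hA => by
    simpa only [Finset.sum_map, Function.comp_apply, Equiv.coe_toEmbedding] using
      sum_le_topSum x (A := A.map e.toEmbedding) (by simpa using hA)

theorem topSum_comp_equiv [Fintype κ] (e : κ ≃ ι) (x : ι → ℝ) {l : ℕ}
    (hl : l ≤ Fintype.card κ) : topSum (x ∘ e) l = topSum x l := by
  refine le_antisymm (topSum_comp_le e x hl) ?_
  simpa [Function.comp_def] using
    topSum_comp_le e.symm (x ∘ e) (hl.trans_eq (Fintype.card_congr e))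

end topSum

section Majorized

variable {ι κ : Type*} [Fintype ι] [Fintype κ]

theorem Majorized.topSum_le {x y : ι → ℝ} (h : Majorized x y) {l : ℕ}
    (hl : l ≤ Fintype.card ι) : topSum x l ≤ topSum y l := by
  rcases Nat.eq_zero_or_pos l with rfl | hpos
  · rw [topSum_zero, topSum_zero]
  · exact h l hpos hl

theorem Majorized.trans {x y z : ι → ℝ} (hxy : Majorized x y) (hyz : Majorized y z) :
    Majorized x z :=
  fun l h1 h2 => (hxy l h1 h2).trans (hyz l h1 h2)

theorem Majorized.comp_equiv {x y : ι → ℝ} (h : Majorized x y) (e : κ ≃ ι) :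
    Majorized (x ∘ e) (y ∘ e) := fun l h1 h2 => by
  rw [topSum_comp_equiv e x h2, topSum_comp_equiv e y h2]
  exact h l h1 (h2.trans_eq (Fintype.card_congr e))

theorem sum_eq_sum_sum_fiber [DecidableEq ι] [DecidableEq κ] {M : Type*} [AddCommMonoid M]
    (B : Finset (ι × κ)) (f : ι × κ → M) :
    ∑ p ∈ B, f p = ∑ j, ∑ i ∈ univ.filter (fun i => (i, j) ∈ B), f (i, j) := by
  simp only [Finset.sum_filter]
  rw [← Fintype.sum_prod_type_right (fun p => if p ∈ B then f p else 0), ← Finset.sum_filter,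
    Finset.filter_mem_eq_inter, Finset.univ_inter]

theorem card_eq_sum_card_fiber [DecidableEq ι] [DecidableEq κ] (B : Finset (ι × κ)) :
    B.card = ∑ j, (univ.filter (fun i => (i, j) ∈ B)).card := by
  simpa only [Finset.card_eq_sum_ones, Nat.cast_id] using sum_eq_sum_sum_fiber B (fun _ => 1)

theorem sum_tensor_le_sum_mul_topSum [DecidableEq ι] [DecidableEq κ] (x : ι → ℝ) {z : κ → ℝ}
    (hz : ∀ j, 0 ≤ z j) (B : Finset (ι × κ)) :
    ∑ p ∈ B, tensor x z p ≤
      ∑ j, z j * topSum x (univ.filter (fun i => (i, j) ∈ B)).card := by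
  rw [sum_eq_sum_sum_fiber]
  refine Finset.sum_le_sum fun j _ => ?_
  simp only [tensor, ← Finset.sum_mul, mul_comm (z j)]
  exact mul_le_mul_of_nonneg_right (sum_le_topSum x rfl) (hz j)

theorem sum_mul_topSum_le_topSum_tensor (y : ι → ℝ) (z : κ → ℝ) {a : κ → ℕ}
    (ha : ∀ j, a j ≤ Fintype.card ι) :
    ∑ j, z j * topSum y (a j) ≤ topSum (tensor y z) (∑ j, a j) := by
  classical
  choose A hAcard hAsum using fun j => exists_card_eq_sum_eq_topSum y (ha j)
  let C : Finset (ι × κ) := univ.filter fun p => p.1 ∈ A p.2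
  have hfiber : ∀ j, univ.filter (fun i => (i, j) ∈ C) = A j := fun j => by
    ext i; simp [C]
  have hC : C.card = ∑ j, a j := by
    simp only [card_eq_sum_card_fiber C, hfiber, hAcard]
  calc ∑ j, z j * topSum y (a j)
      = ∑ p ∈ C, tensor y z p := by
        simp only [sum_eq_sum_sum_fiber C, hfiber, tensor, ← hAsum, Finset.mul_sum, mul_comm]
    _ ≤ topSum (tensor y z) (∑ j, a j) := sum_le_topSum _ hC

theorem Majorized.tensor_right {x y : ι → ℝ} (h : Majorized x y) {z : κ → ℝ}
    (hz : ∀ j, 0 ≤ z j) : Majorized (tensor x z) (tensor y z) := by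
  classical
  intro l _ hl
  refine topSum_le_of_forall hl fun B hB => ?_
  have hfiber : ∀ j, (univ.filter (fun i => (i, j) ∈ B)).card ≤ Fintype.card ι :=
    fun j => Finset.card_le_univ _
  calc ∑ p ∈ B, tensor x z p
      ≤ ∑ j, z j * topSum x (univ.filter (fun i => (i, j) ∈ B)).card :=
        sum_tensor_le_sum_mul_topSum x hz B
    _ ≤ ∑ j, z j * topSum y (univ.filter (fun i => (i, j) ∈ B)).card :=
        Finset.sum_le_sum fun j _ => mul_le_mul_of_nonneg_left (h.topSum_le (hfiber j)) (hz j)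
    _ ≤ topSum (tensor y z) l := by
        rw [← hB, card_eq_sum_card_fiber B]
        exact sum_mul_topSum_le_topSum_tensor y z hfiber

theorem Majorized.tensor_left {x y : κ → ℝ} (h : Majorized x y) {z : ι → ℝ}
    (hz : ∀ i, 0 ≤ z i) : Majorized (tensor z x) (tensor z y) := by
  have hswap : ∀ w : κ → ℝ, tensor z w = tensor w z ∘ Equiv.prodComm ι κ := fun w => by
    funext p; simp [tensor, mul_comm]
  rw [hswap x, hswap y]
  exact (h.tensor_right hz).comp_equiv _

theorem Majorized.tensor {x y : ι → ℝ} {x' y' : κ → ℝ} (h : Majorized x y)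
    (h' : Majorized x' y') (hy : ∀ i, 0 ≤ y i) (hx' : ∀ j, 0 ≤ x' j) :
    Majorized (tensor x x') (tensor y y') :=
  (h.tensor_right hx').trans (h'.tensor_left hy)

end Majorized

section tensorPow

variable {ι : Type*}

theorem tensorPow_nonneg {x : ι → ℝ} (hx : ∀ i, 0 ≤ x i) (p : ℕ) (f : Fin p → ι) :
    0 ≤ tensorPow x p f :=
  Finset.prod_nonneg fun j _ => hx (f j)

theorem tensorPow_add (x : ι → ℝ) (p q : ℕ) :
    tensorPow x (p + q) =
      tensor (tensorPow x p) (tensorPow x q) ∘ (Fin.appendEquiv p q).symm := by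
  funext f
  simp [tensorPow, tensor, Fin.prod_univ_add]

theorem Majorized.tensorPow_add [Fintype ι] {x y : ι → ℝ} (hx : ∀ i, 0 ≤ x i)
    (hy : ∀ i, 0 ≤ y i) {p q : ℕ} (hp : Majorized (tensorPow x p) (tensorPow y p))
    (hq : Majorized (tensorPow x q) (tensorPow y q)) :
    Majorized (tensorPow x (p + q)) (tensorPow y (p + q)) := by
  rw [_root_.tensorPow_add, _root_.tensorPow_add]
  exact (hp.tensor hq (tensorPow_nonneg hy p) (tensorPow_nonneg hx q)).comp_equiv _

end tensorPow

theorem stmt_1_general {N : ℕ} (x y : Fin N → ℝ)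
    (hx0 : ∀ i, 0 ≤ x i)
    (hy0 : ∀ i, 0 ≤ y i)
    (k : ℕ) (hk : 1 ≤ k)
    (h : ∀ p : ℕ, k ≤ p → p ≤ 2 * k - 1 →
      Majorized (tensorPow x p) (tensorPow y p)) :
    ∀ p : ℕ, k ≤ p → Majorized (tensorPow x p) (tensorPow y p) := by
  intro p
  induction p using Nat.strong_induction_on with
  | _ p ih =>
    intro hkp
    by_cases hsmall : p ≤ 2 * k - 1
    · exact h p hkp hsmall
    · obtain ⟨q, rfl⟩ : ∃ q, p = q + k := ⟨p - k, by omega⟩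
      exact (ih q (by omega) (by omega)).tensorPow_add hx0 hy0 (h k le_rfl (by omega))

theorem stmt_1 {N : ℕ} (x y : Fin N → ℝ)
    (hx0 : ∀ i, 0 ≤ x i) (hx1 : ∑ i, x i = 1)
    (hy0 : ∀ i, 0 ≤ y i) (hy1 : ∑ i, y i = 1)
    (k : ℕ) (hk : 1 ≤ k)
    (h : ∀ p : ℕ, k ≤ p → p ≤ 2 * k - 1 →
      Majorized (tensorPow x p) (tensorPow y p)) :
    ∀ p : ℕ, k ≤ p → Majorized (tensorPow x p) (tensorPow y p) :=
  stmt_1_general x y hx0 hy0 k hk h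
end

section
/- (Corollary 2) Let ψ and φ be probability vectors with sorted entries α_1 ≥ … ≥ α_n ≥ 0 and β_1 ≥ … ≥ β_n ≥ 0 respectively, and let c be a probability vector with sorted entries γ_1 ≥ … ≥ γ_k > 0, where k ≥ 2. If ψ⊗c is majorized by φ⊗c (i.e. c is a catalyst for the transformation of ψ to φ), then for every l ∈ L_{ψ,φ}: γ_1·β_l < β_1·γ_2 (i.e. γ_1/γ_2 < β_1/β_l) and γ_{k−1}·β_n < β_{l+1}·γ_k (i.e. γ_{k−1}/γ_k < β_{l+1}/β_n). -/
open Finset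

lemma topSet_finite {ι : Type*} [Fintype ι] (x : ι → ℝ) (l : ℕ) :
    {s : ℝ | ∃ A : Finset ι, A.card = l ∧ s = ∑ i ∈ A, x i}.Finite := by
  have h : {s : ℝ | ∃ A : Finset ι, A.card = l ∧ s = ∑ i ∈ A, x i}
      ⊆ Set.range (fun A : Finset ι => ∑ i ∈ A, x i) := by
    rintro s ⟨A, _, rfl⟩; exact ⟨A, rfl⟩
  exact (Set.finite_range _).subset h

lemma topSet_nonempty {ι : Type*} [Fintype ι] (x : ι → ℝ) {l : ℕ} (hl : l ≤ Fintype.card ι) :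
    {s : ℝ | ∃ A : Finset ι, A.card = l ∧ s = ∑ i ∈ A, x i}.Nonempty := by
  obtain ⟨A, -, hA⟩ := Finset.exists_subset_card_eq (s := (univ : Finset ι)) (by simpa using hl)
  exact ⟨∑ i ∈ A, x i, A, hA, rfl⟩

lemma le_topSum {ι : Type*} [Fintype ι] (x : ι → ℝ) {l : ℕ} {A : Finset ι} (hA : A.card = l) :
    ∑ i ∈ A, x i ≤ topSum x l :=
  le_csSup (topSet_finite x l).bddAbove ⟨A, hA, rfl⟩

lemma topSum_le {ι : Type*} [Fintype ι] (x : ι → ℝ) {l : ℕ} (hl : l ≤ Fintype.card ι) {c : ℝ}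
    (h : ∀ A : Finset ι, A.card = l → ∑ i ∈ A, x i ≤ c) : topSum x l ≤ c := by
  refine csSup_le (topSet_nonempty x hl) ?_
  rintro s ⟨A, hA, rfl⟩; exact h A hA

lemma botSum_le {ι : Type*} [Fintype ι] (x : ι → ℝ) {l : ℕ} {A : Finset ι} (hA : A.card = l) :
    botSum x l ≤ ∑ i ∈ A, x i :=
  csInf_le (topSet_finite x l).bddBelow ⟨A, hA, rfl⟩

lemma le_botSum {ι : Type*} [Fintype ι] (x : ι → ℝ) {l : ℕ} (hl : l ≤ Fintype.card ι) {c : ℝ}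
    (h : ∀ A : Finset ι, A.card = l → c ≤ ∑ i ∈ A, x i) : c ≤ botSum x l := by
  refine le_csInf (topSet_nonempty x hl) ?_
  rintro s ⟨A, hA, rfl⟩; exact h A hA

lemma topSum_eq_total_sub_botSum {ι : Type*} [Fintype ι] [DecidableEq ι] (x : ι → ℝ) {t : ℕ}
    (ht : t ≤ Fintype.card ι) :
    topSum x (Fintype.card ι - t) = (∑ i, x i) - botSum x t := by
  apply le_antisymm
  · apply topSum_le x (Nat.sub_le _ _)
    intro A hA
    have hc : Aᶜ.card = t := by
      have := Finset.card_compl A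
      omega
    have hsplit : ∑ i ∈ Aᶜ, x i + ∑ i ∈ A, x i = ∑ i, x i := Finset.sum_compl_add_sum A x
    have := botSum_le x hc
    linarith
  · have h : (∑ i, x i) - topSum x (Fintype.card ι - t) ≤ botSum x t := by
      apply le_botSum x ht
      intro A hA
      have hc : Aᶜ.card = Fintype.card ι - t := by
        have := Finset.card_compl A; omega
      have hsplit : ∑ i ∈ Aᶜ, x i + ∑ i ∈ A, x i = ∑ i, x i := Finset.sum_compl_add_sum A x
      have := le_topSum x hc
      linarith
    linarith

lemma strictMono_le_apply {m n : ℕ} {f : Fin m → Fin n} (hf : StrictMono f) :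
    ∀ i : ℕ, ∀ h : i < m, i ≤ (f ⟨i, h⟩ : ℕ) := by
  intro i
  induction i with
  | zero => intro h; omega
  | succ i ih =>
    intro h
    have h1 : i < m := by omega
    have h2 : (f ⟨i, h1⟩ : ℕ) < (f ⟨i + 1, h⟩ : ℕ) := hf (by simp [Fin.lt_def])
    have := ih h1
    omega

lemma sum_le_prefixSum {n : ℕ} {x : Fin n → ℝ} (hx : Antitone x) (A : Finset (Fin n)) :
    ∑ i ∈ A, x i ≤ prefixSum x A.card := by
  classical
  set m := A.card with hm
  have hmn : m ≤ n := by
    have := Finset.card_le_card A.subset_univ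
    simpa [← hm] using this
  set f := A.orderEmbOfFin hm.symm with hf
  have himg : Finset.image (fun j => f j) Finset.univ = A := by
    ext a
    simp only [Finset.mem_image, Finset.mem_univ, true_and]
    constructor
    · rintro ⟨j, rfl⟩; exact Finset.orderEmbOfFin_mem A hm.symm j
    · intro ha
      have : a ∈ Set.range (f : Fin m → Fin n) := by
        rw [hf, Finset.range_orderEmbOfFin]; exact ha
      obtain ⟨j, hj⟩ := this; exact ⟨j, hj⟩
  rw [← himg, Finset.sum_image (fun a _ b _ h => f.injective h)]
  have hset : Finset.univ.filter (fun j : Fin n => (j : ℕ) < m) =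
      Finset.image (Fin.castLE hmn) Finset.univ := by
    ext j
    simp only [Finset.mem_filter, Finset.mem_univ, true_and, Finset.mem_image]
    constructor
    · intro h; exact ⟨⟨j, h⟩, rfl⟩
    · rintro ⟨a, rfl⟩; exact a.2
  rw [prefixSum, hset, Finset.sum_image (fun a _ b _ h => Fin.castLE_injective hmn h)]
  apply Finset.sum_le_sum
  intro j _
  apply hx
  rw [Fin.le_def]
  exact strictMono_le_apply f.strictMono j j.2

lemma suffixSum_le_sum {n : ℕ} {x : Fin n → ℝ} (hx : Antitone x) (A : Finset (Fin n)) :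
    suffixSum x (n - A.card) ≤ ∑ i ∈ A, x i := by
  classical
  set y : Fin n → ℝ := fun i => -x (Fin.rev i) with hy
  have hya : Antitone y := by
    intro i j hij
    simp only [hy, neg_le_neg_iff]
    exact hx (by rwa [Fin.rev_le_rev])
  have h1 := sum_le_prefixSum hya (A.image Fin.rev)
  rw [Finset.card_image_of_injective _ Fin.rev_injective] at h1
  have h2 : ∑ i ∈ A.image Fin.rev, y i = -∑ i ∈ A, x i := by
    rw [Finset.sum_image (fun a _ b _ h => Fin.rev_injective h)]
    simp [hy, Fin.rev_rev]
  have hmn : A.card ≤ n := by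
    have := Finset.card_le_card A.subset_univ
    simpa using this
  have hset : Finset.univ.filter (fun j : Fin n => (n - A.card : ℕ) ≤ (j : ℕ)) =
      Finset.image Fin.rev (Finset.univ.filter (fun j : Fin n => (j : ℕ) < A.card)) := by
    ext j
    simp only [Finset.mem_filter, Finset.mem_univ, true_and, Finset.mem_image]
    constructor
    · intro h
      refine ⟨j.rev, ?_, Fin.rev_rev j⟩
      have := j.2
      simp only [Fin.val_rev]
      omega
    · rintro ⟨a, ha, rfl⟩
      have := a.2
      simp only [Fin.val_rev]
      omega
  have h3 : prefixSum y A.card = -suffixSum x (n - A.card) := by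
    rw [prefixSum, suffixSum, hset,
      Finset.sum_image (fun a _ b _ h => Fin.rev_injective h)]
    simp [hy]
  rw [h2, h3] at h1
  linarith

lemma card_filter_interval {n a b : ℕ} (hbn : b ≤ n) :
    (Finset.univ.filter (fun j : Fin n => a ≤ (j : ℕ) ∧ (j : ℕ) < b)).card = b - a := by
  rw [← Finset.card_image_of_injective _ Fin.val_injective]
  have himg : (Finset.univ.filter (fun j : Fin n => a ≤ (j : ℕ) ∧ (j : ℕ) < b)).image Fin.val
      = Finset.Ico a b := by
    ext v
    simp only [Finset.mem_image, Finset.mem_filter, Finset.mem_univ, true_and, Finset.mem_Ico]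
    constructor
    · rintro ⟨j, hj, rfl⟩; exact hj
    · intro hv; exact ⟨⟨v, lt_of_lt_of_le hv.2 hbn⟩, hv, rfl⟩
  rw [himg, Nat.card_Ico]

lemma prefixSum_split {n : ℕ} (x : Fin n → ℝ) {a b : ℕ} (hab : a ≤ b) :
    prefixSum x b = prefixSum x a +
      ∑ j ∈ Finset.univ.filter (fun j : Fin n => a ≤ (j : ℕ) ∧ (j : ℕ) < b), x j := by
  rw [prefixSum, prefixSum, ← Finset.sum_filter_add_sum_filter_not
    (Finset.univ.filter fun j : Fin n => (j : ℕ) < b) (fun j => (j : ℕ) < a) x]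
  congr 1
  · apply Finset.sum_congr _ (fun _ _ => rfl)
    ext j; simp only [Finset.mem_filter, Finset.mem_univ, true_and]
    try omega
  · apply Finset.sum_congr _ (fun _ _ => rfl)
    ext j; simp only [Finset.mem_filter, Finset.mem_univ, true_and]
    try omega

lemma suffixSum_split {n : ℕ} (x : Fin n → ℝ) {a b : ℕ} (hab : a ≤ b) :
    suffixSum x a =
      (∑ j ∈ Finset.univ.filter (fun j : Fin n => a ≤ (j : ℕ) ∧ (j : ℕ) < b), x j) +
        suffixSum x b := by
  rw [suffixSum, suffixSum, ← Finset.sum_filter_add_sum_filter_not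
    (Finset.univ.filter fun j : Fin n => a ≤ (j : ℕ)) (fun j => (j : ℕ) < b) x]
  congr 1
  · apply Finset.sum_congr _ (fun _ _ => rfl)
    ext j; simp only [Finset.mem_filter, Finset.mem_univ, true_and]
    try omega
  · apply Finset.sum_congr _ (fun _ _ => rfl)
    ext j; simp only [Finset.mem_filter, Finset.mem_univ, true_and]
    try omega

lemma prefix_add_suffix {n : ℕ} (x : Fin n → ℝ) (l : ℕ) :
    prefixSum x l + suffixSum x l = ∑ i, x i := by
  rw [prefixSum, suffixSum, ← Finset.sum_filter_add_sum_filter_not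
    Finset.univ (fun j : Fin n => (j : ℕ) < l) x]
  congr 1
  apply Finset.sum_congr _ (fun _ _ => rfl)
  ext j
  simp only [Finset.mem_filter, Finset.mem_univ, true_and]
  omega

lemma tensor_total {n k : ℕ} (x : Fin n → ℝ) (γ : Fin k → ℝ) :
    ∑ p : Fin n × Fin k, tensor x γ p = (∑ i, x i) * (∑ j, γ j) := by
  rw [Finset.sum_mul_sum, Fintype.sum_prod_type]
  rfl

lemma filter_lt_card {n l : ℕ} (hln : l ≤ n) :
    (Finset.univ.filter (fun j : Fin n => (j : ℕ) < l)).card = l := by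
  have h : (Finset.univ.filter (fun j : Fin n => (j : ℕ) < l)) =
      (Finset.univ.filter (fun j : Fin n => 0 ≤ (j : ℕ) ∧ (j : ℕ) < l)) := by
    ext j; simp
  rw [h, card_filter_interval hln]
  omega

lemma filter_ge_card {n l : ℕ} (hln : l ≤ n) :
    (Finset.univ.filter (fun j : Fin n => l ≤ (j : ℕ))).card = n - l := by
  have h : (Finset.univ.filter (fun j : Fin n => l ≤ (j : ℕ))) =
      (Finset.univ.filter (fun j : Fin n => l ≤ (j : ℕ) ∧ (j : ℕ) < n)) := by
    ext j; simp only [Finset.mem_filter, Finset.mem_univ, true_and]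
    exact ⟨fun h => ⟨h, j.2⟩, fun h => h.1⟩
  rw [h, card_filter_interval le_rfl]

lemma gamma_prefix_le_topSum {n k : ℕ} (x : Fin n → ℝ) (γ : Fin k → ℝ) (hk : 0 < k)
    {l : ℕ} (hln : l ≤ n) :
    prefixSum x l * γ ⟨0, hk⟩ ≤ topSum (tensor x γ) l := by
  classical
  set c0 : Fin k := ⟨0, hk⟩
  set A : Finset (Fin n × Fin k) :=
    (Finset.univ.filter (fun j : Fin n => (j : ℕ) < l)).image (fun j => (j, c0)) with hA
  have hinj : ∀ a b : Fin n, (a, c0) = (b, c0) → a = b := by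
    intro a b h; exact congrArg Prod.fst h
  have hcard : A.card = l := by
    rw [hA, Finset.card_image_of_injective _ (fun a b h => hinj a b h), filter_lt_card hln]
  have hsum : ∑ p ∈ A, tensor x γ p = prefixSum x l * γ c0 := by
    rw [hA, Finset.sum_image (fun a _ b _ h => hinj a b h), prefixSum, Finset.sum_mul]
    rfl
  rw [← hsum]
  exact le_topSum _ hcard

lemma botSum_tensor_le {n k : ℕ} (x : Fin n → ℝ) (γ : Fin k → ℝ) (hk : 0 < k)
    {l : ℕ} (hln : l ≤ n) :
    botSum (tensor x γ) (n - l) ≤ suffixSum x l * γ ⟨k - 1, by omega⟩ := by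
  classical
  set ck : Fin k := ⟨k - 1, by omega⟩
  set A : Finset (Fin n × Fin k) :=
    (Finset.univ.filter (fun j : Fin n => l ≤ (j : ℕ))).image (fun j => (j, ck)) with hA
  have hinj : ∀ a b : Fin n, (a, ck) = (b, ck) → a = b := by
    intro a b h; exact congrArg Prod.fst h
  have hcard : A.card = n - l := by
    rw [hA, Finset.card_image_of_injective _ (fun a b h => hinj a b h), filter_ge_card hln]
  have hsum : ∑ p ∈ A, tensor x γ p = suffixSum x l * γ ck := by
    rw [hA, Finset.sum_image (fun a _ b _ h => hinj a b h), suffixSum, Finset.sum_mul]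
    rfl
  rw [← hsum]
  exact botSum_le _ hcard

lemma topSum_tensor_le {n k : ℕ} (hk : 2 ≤ k) (φ : Fin n → ℝ) (γ : Fin k → ℝ)
    (hφa : Antitone φ) (hγa : Antitone γ) (hφ0 : ∀ i, 0 ≤ φ i) (hγ0 : ∀ i, 0 < γ i)
    {l : ℕ} (hl1 : 1 ≤ l) (hln : l ≤ n)
    (h : φ ⟨0, by omega⟩ * γ ⟨1, Nat.lt_of_lt_of_le one_lt_two hk⟩ ≤
      φ ⟨l - 1, by omega⟩ * γ ⟨0, Nat.lt_of_lt_of_le two_pos hk⟩) :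
    topSum (tensor φ γ) l ≤ prefixSum φ l * γ ⟨0, Nat.lt_of_lt_of_le two_pos hk⟩ := by
  classical
  have hn : 0 < n := by omega
  set c0 : Fin k := ⟨0, by omega⟩ with hc0
  have hcardl : l ≤ Fintype.card (Fin n × Fin k) := by
    simp only [Fintype.card_prod, Fintype.card_fin]
    have : n * 1 ≤ n * k := Nat.mul_le_mul_left n (by omega)
    omega
  apply topSum_le _ hcardl
  intro A hA
  set A1 := A.filter (fun p => p.2 = c0) with hA1
  set A2 := A.filter (fun p => ¬ p.2 = c0) with hA2
  set m := A1.card with hm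
  have hml : m ≤ l := by rw [hm, ← hA, hA1]; exact Finset.card_filter_le _ _
  have hsplit : ∑ p ∈ A1, tensor φ γ p + ∑ p ∈ A2, tensor φ γ p = ∑ p ∈ A, tensor φ γ p :=
    Finset.sum_filter_add_sum_filter_not A _ _
  have hcard2 : A2.card = l - m := by
    have := Finset.card_filter_add_card_filter_not (s := A) (p := fun p => p.2 = c0)
    rw [← hA1, ← hA2] at this
    omega
  -- bound on A1
  have hinj : ∀ p ∈ A1, ∀ q ∈ A1, p.1 = q.1 → p = q := by
    intro p hp q hq hpq
    have hp2 : p.2 = c0 := (Finset.mem_filter.mp hp).2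
    have hq2 : q.2 = c0 := (Finset.mem_filter.mp hq).2
    exact Prod.ext hpq (hp2.trans hq2.symm)
  have hb1 : ∑ p ∈ A1, tensor φ γ p ≤ prefixSum φ m * γ c0 := by
    have e1 : ∑ p ∈ A1, tensor φ γ p = (∑ p ∈ A1, φ p.1) * γ c0 := by
      rw [Finset.sum_mul]
      apply Finset.sum_congr rfl
      intro p hp
      have : p.2 = c0 := (Finset.mem_filter.mp hp).2
      simp [tensor, this]
    have e2 : ∑ p ∈ A1, φ p.1 = ∑ i ∈ A1.image Prod.fst, φ i :=
      (Finset.sum_image hinj).symm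
    have e3 : (A1.image Prod.fst).card = m := Finset.card_image_of_injOn hinj
    have e4 : ∑ i ∈ A1.image Prod.fst, φ i ≤ prefixSum φ m := by
      have := sum_le_prefixSum hφa (A1.image Prod.fst)
      rwa [e3] at this
    rw [e1, e2]
    exact mul_le_mul_of_nonneg_right e4 (hγ0 c0).le
  -- bound on A2
  have hb2 : ∑ p ∈ A2, tensor φ γ p ≤ (l - m : ℕ) * (φ ⟨l - 1, by omega⟩ * γ c0) := by
    have hterm : ∀ p ∈ A2, tensor φ γ p ≤ φ ⟨l - 1, by omega⟩ * γ c0 := by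
      intro p hp
      have hp2 : ¬ p.2 = c0 := (Finset.mem_filter.mp hp).2
      have hp2v : 1 ≤ (p.2 : ℕ) := by
        rcases Nat.eq_zero_or_pos (p.2 : ℕ) with h0 | h0
        · exact absurd (Fin.ext h0) hp2
        · omega
      have h1 : φ p.1 ≤ φ ⟨0, by omega⟩ := hφa (by simp [Fin.le_def])
      have h2 : γ p.2 ≤ γ ⟨1, by omega⟩ := hγa (by rw [Fin.le_def]; simpa using hp2v)
      have : tensor φ γ p ≤ φ ⟨0, by omega⟩ * γ ⟨1, by omega⟩ :=
        mul_le_mul h1 h2 (hγ0 p.2).le (hφ0 _)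
      exact this.trans h
    calc ∑ p ∈ A2, tensor φ γ p ≤ A2.card • (φ ⟨l - 1, by omega⟩ * γ c0) :=
          Finset.sum_le_card_nsmul _ _ _ hterm
      _ = (l - m : ℕ) * (φ ⟨l - 1, by omega⟩ * γ c0) := by rw [hcard2]; simp
  -- interval bound
  have hb3 : ((l - m : ℕ) : ℝ) * φ ⟨l - 1, by omega⟩ ≤
      ∑ j ∈ Finset.univ.filter (fun j : Fin n => m ≤ (j : ℕ) ∧ (j : ℕ) < l), φ j := by
    have hcardI := card_filter_interval (n := n) (a := m) (b := l) hln
    have hterm : ∀ j ∈ Finset.univ.filter (fun j : Fin n => m ≤ (j : ℕ) ∧ (j : ℕ) < l),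
        φ ⟨l - 1, by omega⟩ ≤ φ j := by
      intro j hj
      have hj' := (Finset.mem_filter.mp hj).2
      exact hφa (by rw [Fin.le_def]; simp; omega)
    have := Finset.card_nsmul_le_sum _ _ _ hterm
    rw [hcardI] at this
    simpa using this
  have hps := prefixSum_split φ hml
  have hγc0 := (hγ0 c0).le
  have : ∑ p ∈ A, tensor φ γ p ≤ prefixSum φ m * γ c0 +
      (prefixSum φ l - prefixSum φ m) * γ c0 := by
    rw [← hsplit]
    have hb3' : ((l - m : ℕ) : ℝ) * (φ ⟨l - 1, by omega⟩ * γ c0) ≤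
        (prefixSum φ l - prefixSum φ m) * γ c0 := by
      rw [← mul_assoc]
      apply mul_le_mul_of_nonneg_right _ hγc0
      linarith [hb3, hps]
    linarith
  linarith

lemma le_botSum_tensor {n k : ℕ} (hk : 2 ≤ k) (φ : Fin n → ℝ) (γ : Fin k → ℝ)
    (hφa : Antitone φ) (hγa : Antitone γ) (hφ0 : ∀ i, 0 ≤ φ i) (hγ0 : ∀ i, 0 < γ i)
    {l : ℕ} (hln : l < n)
    (h : φ ⟨l, hln⟩ * γ ⟨k - 1, Nat.sub_lt (Nat.lt_of_lt_of_le two_pos hk) one_pos⟩ ≤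
      φ ⟨n - 1, by omega⟩ * γ ⟨k - 2, Nat.sub_lt (Nat.lt_of_lt_of_le two_pos hk) two_pos⟩) :
    suffixSum φ l * γ ⟨k - 1, Nat.sub_lt (Nat.lt_of_lt_of_le two_pos hk) one_pos⟩ ≤
      botSum (tensor φ γ) (n - l) := by
  classical
  have hn : 0 < n := by omega
  set ck : Fin k := ⟨k - 1, by omega⟩ with hck
  have hcardl : n - l ≤ Fintype.card (Fin n × Fin k) := by
    simp only [Fintype.card_prod, Fintype.card_fin]
    have : n * 1 ≤ n * k := Nat.mul_le_mul_left n (by omega)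
    omega
  apply le_botSum _ hcardl
  intro A hA
  set t := n - l with htdef
  set A1 := A.filter (fun p => p.2 = ck) with hA1
  set A2 := A.filter (fun p => ¬ p.2 = ck) with hA2
  set m := A1.card with hm
  have hml : m ≤ t := by rw [hm, ← hA, hA1]; exact Finset.card_filter_le _ _
  have hlnm : l ≤ n - m := by omega
  have hsplit : ∑ p ∈ A1, tensor φ γ p + ∑ p ∈ A2, tensor φ γ p = ∑ p ∈ A, tensor φ γ p :=
    Finset.sum_filter_add_sum_filter_not A _ _
  have hcard2 : A2.card = t - m := by
    have := Finset.card_filter_add_card_filter_not (s := A) (p := fun p => p.2 = ck)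
    rw [← hA1, ← hA2] at this
    omega
  have hinj : ∀ p ∈ A1, ∀ q ∈ A1, p.1 = q.1 → p = q := by
    intro p hp q hq hpq
    have hp2 : p.2 = ck := (Finset.mem_filter.mp hp).2
    have hq2 : q.2 = ck := (Finset.mem_filter.mp hq).2
    exact Prod.ext hpq (hp2.trans hq2.symm)
  have hb1 : suffixSum φ (n - m) * γ ck ≤ ∑ p ∈ A1, tensor φ γ p := by
    have e1 : ∑ p ∈ A1, tensor φ γ p = (∑ p ∈ A1, φ p.1) * γ ck := by
      rw [Finset.sum_mul]
      apply Finset.sum_congr rfl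
      intro p hp
      have : p.2 = ck := (Finset.mem_filter.mp hp).2
      simp [tensor, this]
    have e2 : ∑ p ∈ A1, φ p.1 = ∑ i ∈ A1.image Prod.fst, φ i :=
      (Finset.sum_image hinj).symm
    have e3 : (A1.image Prod.fst).card = m := Finset.card_image_of_injOn hinj
    have e4 : suffixSum φ (n - m) ≤ ∑ i ∈ A1.image Prod.fst, φ i := by
      have := suffixSum_le_sum hφa (A1.image Prod.fst)
      rwa [e3] at this
    rw [e1, e2]
    exact mul_le_mul_of_nonneg_right e4 (hγ0 ck).le
  have hb2 : ((t - m : ℕ) : ℝ) * (φ ⟨l, hln⟩ * γ ck) ≤ ∑ p ∈ A2, tensor φ γ p := by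
    have hterm : ∀ p ∈ A2, φ ⟨l, hln⟩ * γ ck ≤ tensor φ γ p := by
      intro p hp
      have hp2 : ¬ p.2 = ck := (Finset.mem_filter.mp hp).2
      have hp2v : (p.2 : ℕ) ≤ k - 2 := by
        have hv := p.2.2
        have : ¬ (p.2 : ℕ) = k - 1 := fun hc => hp2 (Fin.ext (by rw [hc]))
        omega
      have h1 : φ ⟨n - 1, by omega⟩ ≤ φ p.1 := hφa (by rw [Fin.le_def]; simp; omega)
      have h2 : γ ⟨k - 2, by omega⟩ ≤ γ p.2 := hγa (by rw [Fin.le_def]; simpa using hp2v)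
      have : φ ⟨n - 1, by omega⟩ * γ ⟨k - 2, by omega⟩ ≤ tensor φ γ p :=
        mul_le_mul h1 h2 (hγ0 _).le (hφ0 _)
      exact h.trans this
    have := Finset.card_nsmul_le_sum _ _ _ hterm
    rw [hcard2] at this
    simpa using this
  have hb3 : ∑ j ∈ Finset.univ.filter (fun j : Fin n => l ≤ (j : ℕ) ∧ (j : ℕ) < n - m), φ j ≤
      ((t - m : ℕ) : ℝ) * φ ⟨l, hln⟩ := by
    have hcardI := card_filter_interval (n := n) (a := l) (b := n - m) (by omega)
    have hterm : ∀ j ∈ Finset.univ.filter (fun j : Fin n => l ≤ (j : ℕ) ∧ (j : ℕ) < n - m),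
        φ j ≤ φ ⟨l, hln⟩ := by
      intro j hj
      have hj' := (Finset.mem_filter.mp hj).2
      exact hφa (by rw [Fin.le_def]; simp; omega)
    have := Finset.sum_le_card_nsmul _ _ _ hterm
    rw [hcardI] at this
    have htm : n - m - l = t - m := by omega
    rw [htm] at this
    simpa using this
  have hss := suffixSum_split φ hlnm
  have hγck := (hγ0 ck).le
  have hb2' : (suffixSum φ l - suffixSum φ (n - m)) * γ ck ≤ ∑ p ∈ A2, tensor φ γ p := by
    refine le_trans ?_ hb2
    rw [← mul_assoc]
    apply mul_le_mul_of_nonneg_right _ hγck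
    linarith [hb3, hss]
  linarith

theorem stmt_5 {n k : ℕ} (hk : 2 ≤ k) (ψ φ : Fin n → ℝ) (γ : Fin k → ℝ)
    (hψa : Antitone ψ) (hφa : Antitone φ) (hγa : Antitone γ)
    (hψ0 : ∀ i, 0 ≤ ψ i) (hψ1 : ∑ i, ψ i = 1)
    (hφ0 : ∀ i, 0 ≤ φ i) (hφ1 : ∑ i, φ i = 1)
    (hγ0 : ∀ i, 0 < γ i) (hγ1 : ∑ i, γ i = 1)
    (hcat : Majorized (tensor ψ γ) (tensor φ γ)) :
    ∀ l : ℕ, ∀ _hl1 : 1 ≤ l, ∀ hln : l < n,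
      prefixSum ψ l > prefixSum φ l →
      γ ⟨0, by omega⟩ * φ ⟨l - 1, by omega⟩ < φ ⟨0, by omega⟩ * γ ⟨1, by omega⟩ ∧
      γ ⟨k - 2, by omega⟩ * φ ⟨n - 1, by omega⟩ < φ ⟨l, hln⟩ * γ ⟨k - 1, by omega⟩ := by
  intro l hl1 hln hL
  have hn : 0 < n := by omega
  have hnk : 2 * n ≤ n * k := by
    have := Nat.mul_le_mul_left n hk
    omega
  constructor
  · by_contra hcon
    push_neg at hcon
    have hmc : φ ⟨0, by omega⟩ * γ ⟨1, by omega⟩ ≤ φ ⟨l - 1, by omega⟩ * γ ⟨0, by omega⟩ := by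
      have := mul_comm (γ (⟨0, by omega⟩ : Fin k)) (φ (⟨l - 1, by omega⟩ : Fin n))
      linarith
    have hub := topSum_tensor_le hk φ γ hφa hγa hφ0 hγ0 hl1 hln.le hmc
    have hlb := gamma_prefix_le_topSum ψ γ (by omega) hln.le
    have hmaj := hcat l hl1 (by simp only [Fintype.card_prod, Fintype.card_fin]; omega)
    have hγp := hγ0 (⟨0, by omega⟩ : Fin k)
    nlinarith [mul_pos (sub_pos.mpr hL) hγp]
  · by_contra hcon
    push_neg at hcon
    have hmc : φ ⟨l, hln⟩ * γ ⟨k - 1, by omega⟩ ≤ φ ⟨n - 1, by omega⟩ * γ ⟨k - 2, by omega⟩ := by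
      have := mul_comm (γ (⟨k - 2, by omega⟩ : Fin k)) (φ (⟨n - 1, by omega⟩ : Fin n))
      linarith
    have hub := botSum_tensor_le ψ γ (by omega) hln.le
    have hlb := le_botSum_tensor hk φ γ hφa hγa hφ0 hγ0 hln hmc
    have hNc : Fintype.card (Fin n × Fin k) = n * k := by simp
    have ht : n - l ≤ Fintype.card (Fin n × Fin k) := by rw [hNc]; omega
    have e1 := topSum_eq_total_sub_botSum (tensor ψ γ) ht
    have e2 := topSum_eq_total_sub_botSum (tensor φ γ) ht
    have tot1 : ∑ p, tensor ψ γ p = 1 := by rw [tensor_total, hψ1, hγ1]; ring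
    have tot2 : ∑ p, tensor φ γ p = 1 := by rw [tensor_total, hφ1, hγ1]; ring
    rw [tot1] at e1
    rw [tot2] at e2
    have hmaj := hcat (Fintype.card (Fin n × Fin k) - (n - l))
      (by rw [hNc]; omega) (Nat.sub_le _ _)
    rw [e1, e2] at hmaj
    have hp1 := prefix_add_suffix ψ l
    have hp2 := prefix_add_suffix φ l
    rw [hψ1] at hp1
    rw [hφ1] at hp2
    have hsuf : suffixSum ψ l < suffixSum φ l := by linarith
    have hγp := hγ0 (⟨k - 1, by omega⟩ : Fin k)
    nlinarith [mul_pos (sub_pos.mpr hsuf) hγp]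
end
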